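/- arXiv:2605.28299 — 6 statements merged into one kernel-verified Lean document; each statement's English description precedes it below -/
import Mathlib

section
/- Let V be a set and N an open normal subgroup of the profinite group D_p^V. If π_v(N) ⊇ C_p for some v ∈ V, then (C_p)_v ⊆ N, where (C_p)_v denotes the subgroup of elements lying in C_p in the v coordinate and equal to the identity in all other coordinates. -/
open Function

noncomputable section

/-- A discrete group is a topological group. -/
instance (priority := 50) discreteTopologicalGroup (G : Type*) [Group G] [TopologicalSpace G]
    [DiscreteTopology G] : IsTopologicalGroup G where
  continuous_mul := continuous_of_discreteTopology
  continuous_inv := continuous_of_discreteTopology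

/-- The sign epimorphism `τ : D_p → C_2 = {±1}` killing the rotations. -/
def dihedralSign (p : ℕ) : DihedralGroup p →* ℤˣ where
  toFun x := match x with
    | DihedralGroup.r _ => 1
    | DihedralGroup.sr _ => -1
  map_one' := rfl
  map_mul' a b := by cases a <;> cases b <;> rfl

/-- `{±1}` acts on a commutative group by exponentiation (i.e. `-1` acts by inversion). -/
def unitsIntAut (A : Type*) [CommGroup A] : ℤˣ →* MulAut A where
  toFun u :=
    { toFun := fun x => x ^ (u : ℤ)
      invFun := fun x => x ^ (u : ℤ)
      left_inv := fun x => by rcases Int.units_eq_one_or u with h | h <;> simp [h]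
      right_inv := fun x => by rcases Int.units_eq_one_or u with h | h <;> simp [h]
      map_mul' := fun x y => mul_zpow x y _ }
  map_one' := by ext x; simp
  map_mul' u v := by
    ext x
    rcases Int.units_eq_one_or u with h | h <;>
      rcases Int.units_eq_one_or v with h' | h' <;>
        simp [h, h']

/-- The action of `D_p × D_p` on `C_q` given by `(x,y) · g = g^(τ(x)τ(y))`. -/
def Wact (p q : ℕ) : DihedralGroup p × DihedralGroup p →* MulAut (Multiplicative (ZMod q)) :=
  (unitsIntAut (Multiplicative (ZMod q))).comp
    (((dihedralSign p).comp (MonoidHom.fst _ _)) * ((dihedralSign p).comp (MonoidHom.snd _ _)))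

/-- The group `W = C_q ⋊ (D_p × D_p)`. -/
abbrev Wgrp (p q : ℕ) : Type :=
  SemidirectProduct (Multiplicative (ZMod q)) (DihedralGroup p × DihedralGroup p) (Wact p q)

/-- The quotient map `λ : W → D_p × D_p`. -/
abbrev lamW (p q : ℕ) : Wgrp p q →* DihedralGroup p × DihedralGroup p :=
  SemidirectProduct.rightHom

/-- The group `G_Γ ≤ D_p^V × W^R` associated to a graph `Γ = (V, R)`. -/
def GGamma (p q : ℕ) (V : Type*) (R : Set (V × V)) :
    Subgroup ((V → DihedralGroup p) × (R → Wgrp p q)) where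
  carrier := {x | ∀ r : R,
    SemidirectProduct.rightHom (x.2 r) = (x.1 (r : V × V).1, x.1 (r : V × V).2)}
  one_mem' := by intro r; simp <;> rfl
  mul_mem' := by
    intro a b ha hb r
    simp only [Set.mem_setOf_eq] at ha hb
    simp only [Prod.snd_mul, Pi.mul_apply, map_mul, Prod.fst_mul, ha r, hb r, Prod.mk_mul_mk]
  inv_mem' := by
    intro a ha r
    simp only [Set.mem_setOf_eq] at ha
    simp only [Prod.snd_inv, Pi.inv_apply, map_inv, Prod.fst_inv, ha r, Prod.inv_mk]

instance (n : ℕ) : TopologicalSpace (DihedralGroup n) := ⊥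
instance (n : ℕ) : DiscreteTopology (DihedralGroup n) := ⟨rfl⟩
instance (p q : ℕ) : TopologicalSpace (Wgrp p q) := ⊥
instance (p q : ℕ) : DiscreteTopology (Wgrp p q) := ⟨rfl⟩

variable (p q : ℕ) (V : Type*) (R : Set (V × V))

/-- The coordinate projection `π_v : G_Γ → D_p` at a vertex `v`. -/
def vProj (v : V) : ↥(GGamma p q V R) →* DihedralGroup p :=
  (Pi.evalMonoidHom (fun _ : V => DihedralGroup p) v).comp
    ((MonoidHom.fst _ _).comp (GGamma p q V R).subtype)

/-- The coordinate projection `π_r : G_Γ → W` at an edge `r`. -/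
def eProj (r : R) : ↥(GGamma p q V R) →* Wgrp p q :=
  (Pi.evalMonoidHom (fun _ : R => Wgrp p q) r).comp
    ((MonoidHom.snd _ _).comp (GGamma p q V R).subtype)

variable (I : Type*)

/-- The coordinate projection `π_v : G_Γ × C_2^I → D_p` at a vertex `v`. -/
def vProjK (v : V) : (↥(GGamma p q V R) × (I → ℤˣ)) →* DihedralGroup p :=
  (vProj p q V R v).comp (MonoidHom.fst _ _)

/-- The coordinate projection `π_r : G_Γ × C_2^I → W` at an edge `r`. -/
def eProjK (r : R) : (↥(GGamma p q V R) × (I → ℤˣ)) →* Wgrp p q :=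
  (eProj p q V R r).comp (MonoidHom.fst _ _)

/-- The map `ξ_Γ : G_Γ → C_2^V`, `((a_v), (b_r)) ↦ (τ(a_v))_v`. -/
def xiGamma : ↥(GGamma p q V R) →* (V → ℤˣ) :=
  Pi.monoidHom fun v => (dihedralSign p).comp (vProj p q V R v)

end


/-!
Conjugating by the reflection `sr 0` inverts rotations, so the commutator of a rotation `r i` with
it is `r (2 * i)`. Taking `n ∈ N` with `n v = r i` and the reflection `s` placed in coordinate `v`,
the commutator `⁅n, s⁆` lies in `N` by normality and equals `r (2 * i)` at `v` and `1` elsewhere.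
Since `p` is odd, `2` is invertible in `ZMod p`, so every rotation arises this way.
-/

open DihedralGroup
open scoped commutatorElement

theorem DihedralGroup.commutatorElement_r_sr {n : ℕ} (i j : ZMod n) :
    ⁅r i, sr j⁆ = r (2 * i) := by
  simp only [commutatorElement_def, inv_r, inv_sr, r_mul_sr, sr_mul_r, sr_mul_sr]
  ring_nf

theorem mem_ker_dihedralSign_iff {n : ℕ} {x : DihedralGroup n} :
    x ∈ (dihedralSign n).ker ↔ ∃ i, x = r i := by
  cases x with
  | r i => exact ⟨fun _ => ⟨i, rfl⟩, fun _ => rfl⟩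
  | sr i =>
    have hsign : (-1 : ℤˣ) ≠ 1 := by decide
    exact ⟨fun h => absurd h hsign, fun ⟨_, h⟩ => by cases h⟩

theorem ZMod.exists_two_mul_eq {n : ℕ} (hn : Odd n) (j : ZMod n) : ∃ i, 2 * i = j := by
  let two : (ZMod n)ˣ := ZMod.unitOfCoprime 2 (Nat.coprime_two_left.mpr hn)
  refine ⟨(two⁻¹ : (ZMod n)ˣ) * j, ?_⟩
  rw [← mul_assoc, show (2 : ZMod n) = two by simp [two], Units.mul_inv, one_mul]

theorem Pi.commutatorElement_mulSingle {ι : Type*} [DecidableEq ι] {G : ι → Type*}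
    [∀ i, Group (G i)] (x : ∀ i, G i) (i : ι) (g : G i) :
    ⁅x, Pi.mulSingle i g⁆ = Pi.mulSingle i ⁅x i, g⁆ := by
  funext k
  by_cases hk : k = i
  · subst hk
    simp [commutatorElement_def]
  · simp [commutatorElement_def, Pi.mulSingle_eq_of_ne hk]

theorem Subgroup.Normal.commutatorElement_mem_left {G : Type*} [Group G] {N : Subgroup G}
    (hN : N.Normal) {x : G} (hx : x ∈ N) (g : G) : ⁅x, g⁆ ∈ N := by
  rw [commutatorElement_def, mul_assoc, mul_assoc]
  exact N.mul_mem hx (by simpa [mul_assoc] using hN.conj_mem _ (N.inv_mem hx) g)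

theorem statement_6_general (p : ℕ) (hodd : Odd p) (V : Type) [DecidableEq V]
    (N : Subgroup (V → DihedralGroup p)) [N.Normal] (v : V)
    (h : (dihedralSign p).ker ≤ N.map (Pi.evalMonoidHom (fun _ : V => DihedralGroup p) v)) :
    ((dihedralSign p).ker).map (MonoidHom.mulSingle (fun _ : V => DihedralGroup p) v) ≤ N := by
  rintro _ ⟨g, hg, rfl⟩
  obtain ⟨j, rfl⟩ := mem_ker_dihedralSign_iff.mp hg
  obtain ⟨i, rfl⟩ := ZMod.exists_two_mul_eq hodd j
  obtain ⟨n, hn, hnv⟩ := h (mem_ker_dihedralSign_iff.mpr ⟨i, rfl⟩)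
  have hcomm := Subgroup.Normal.commutatorElement_mem_left ‹N.Normal› hn (Pi.mulSingle v (sr 0))
  rwa [Pi.commutatorElement_mulSingle, show n v = r i from hnv, commutatorElement_r_sr] at hcomm

/-- Fix an odd prime `p`, and let `C_p = ker τ` be the rotation subgroup of
`D_p`.  Let `V` be a set and `N` an open normal subgroup of the profinite group `D_p^V`.
If `π_v(N) ⊇ C_p` for some `v ∈ V`, then `(C_p)_v ⊆ N`, where `(C_p)_v` is the subgroup of
elements lying in `C_p` in the `v` coordinate and equal to the identity elsewhere. -/
theorem statement_6 (p : ℕ) (hp : p.Prime) (hodd : Odd p) (V : Type) [DecidableEq V]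
    (N : Subgroup (V → DihedralGroup p)) [N.Normal]
    (hNo : IsOpen (N : Set (V → DihedralGroup p))) (v : V)
    (h : (dihedralSign p).ker ≤ N.map (Pi.evalMonoidHom (fun _ : V => DihedralGroup p) v)) :
    ((dihedralSign p).ker).map (MonoidHom.mulSingle (fun _ : V => DihedralGroup p) v) ≤ N :=
  statement_6_general p hodd V N v h
end

section
/- Let Γ = (V,R) be a graph, I a set, and N an open normal subgroup of G_Γ × C_2^I. If π_v(N) ⊇ C_p for some v ∈ V, then (C_p)_v ⊆ N. -/
open Function

noncomputable section
variable (p q : ℕ) (V : Type*) (R : Set (V × V))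

/-- The edge set of the induced subgraph on a set `V₀` of vertices. -/
def inducedR (V0 : Set V) : Set (↥V0 × ↥V0) := {e | ((e.1 : V), (e.2 : V)) ∈ R}

/-- The coordinate projection `π_{Γ₀} : G_Γ → G_{Γ₀}` onto the group of an induced
subgraph. -/
def projGGamma (V0 : Set V) :
    ↥(GGamma p q V R) →* ↥(GGamma p q ↥V0 (inducedR V R V0)) :=
  MonoidHom.codRestrict
    ((MonoidHom.prod
      ((Pi.monoidHom fun v : ↥V0 =>
        Pi.evalMonoidHom (fun _ : V => DihedralGroup p) (v : V)).comp (MonoidHom.fst _ _))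
      ((Pi.monoidHom fun e : inducedR V R V0 =>
        Pi.evalMonoidHom (fun _ : R => Wgrp p q)
          (⟨(((e : ↥V0 × ↥V0).1 : V), ((e : ↥V0 × ↥V0).2 : V)), e.2⟩ : R)).comp
        (MonoidHom.snd _ _))).comp (GGamma p q V R).subtype)
    (GGamma p q ↥V0 (inducedR V R V0))
    (fun x => by
      intro e
      exact x.2 ⟨(((e : ↥V0 × ↥V0).1 : V), ((e : ↥V0 × ↥V0).2 : V)), e.2⟩)
end
noncomputable section
variable (p q : ℕ) (V : Type*) (R : Set (V × V))

/-- The edge component of the embedding `g ↦ (g)_v`. -/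
def vertEmbW [DecidableEq V] (v : V) (r : V × V) : DihedralGroup p →* Wgrp p q :=
  SemidirectProduct.inr.comp
    (MonoidHom.prod (if r.1 = v then MonoidHom.id _ else 1) (if r.2 = v then MonoidHom.id _ else 1))

/-- The embedding `g ↦ (g)_v : D_p → G_Γ` associated to a vertex `v`. -/
def vertEmb [DecidableEq V] (v : V) : DihedralGroup p →* ↥(GGamma p q V R) :=
  MonoidHom.codRestrict
    (MonoidHom.prod
      (Pi.monoidHom fun w : V => if w = v then MonoidHom.id (DihedralGroup p) else 1)
      (Pi.monoidHom fun r : R => vertEmbW p q V v (r : V × V)))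
    (GGamma p q V R)
    (fun g => by
      intro r
      by_cases h1 : (r : V × V).1 = v <;> by_cases h2 : (r : V × V).2 = v <;>
        simp [vertEmbW, h1, h2, Pi.monoidHom]
      )

/-- The embedding `g ↦ (g)_v : D_p → G_Γ × C_2^I`. -/
def vertEmbK (I : Type*) [DecidableEq V] (v : V) :
    DihedralGroup p →* (↥(GGamma p q V R) × (I → ℤˣ)) :=
  MonoidHom.prod (vertEmb p q V R v) 1

/-- The embedding `C_q → G_Γ` associated to an edge `r`. -/
def edgeEmb [DecidableEq V] (r : R) : Multiplicative (ZMod q) →* ↥(GGamma p q V R) :=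
  MonoidHom.codRestrict
    (MonoidHom.prod (1 : Multiplicative (ZMod q) →* (V → DihedralGroup p))
      (Pi.monoidHom fun r' : R => if r' = r then SemidirectProduct.inl else 1))
    (GGamma p q V R)
    (fun a => by
      intro r'
      by_cases h : r' = r <;> simp [h, Pi.monoidHom] <;> rfl)

/-- The embedding `C_q → G_Γ × C_2^I` associated to an edge `r`. -/
def edgeEmbK (I : Type*) [DecidableEq V] (r : R) :
    Multiplicative (ZMod q) →* (↥(GGamma p q V R) × (I → ℤˣ)) :=
  MonoidHom.prod (edgeEmb p q V R r) 1

/-- The embedding `C_q^R → G_Γ × C_2^I` of the product of all edge `C_q`'s. -/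
def cqREmbK (I : Type*) : (R → Multiplicative (ZMod q)) →* (↥(GGamma p q V R) × (I → ℤˣ)) :=
  MonoidHom.prod
    (MonoidHom.codRestrict
      (MonoidHom.prod (1 : (R → Multiplicative (ZMod q)) →* (V → DihedralGroup p))
        (Pi.monoidHom fun r : R =>
          SemidirectProduct.inl.comp (Pi.evalMonoidHom (fun _ : R => Multiplicative (ZMod q)) r)))
      (GGamma p q V R)
      (fun a => by intro r; simp [Pi.monoidHom] <;> rfl))
    1
end

/-!
Take `n ∈ N` whose `v`-coordinate is `γ^i`. Its commutator with the reflection `(β)_v` lies in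
`N`, has `v`-coordinate `γ^(2i)` and trivial coordinates at the other vertices, and its edge
coordinates lie in `C_q × C_p × C_p`, because the action on `C_q` factors through the abelian
group `C_2` and hence kills commutators. Its `q`-th power therefore is `((γ^i)_v)^(2q)`, and as
`2q` is prime to `p`, `(γ^i)_v` is a power of it.
-/

open scoped commutatorElement

theorem Subgroup.mem_of_pow_mem_of_coprime {G : Type*} [Group G] {H : Subgroup G} {x : G}
    {m n : ℕ} (hx : x ^ n = 1) (hmn : m.Coprime n) (h : x ^ m ∈ H) : x ∈ H := by
  obtain ⟨k, hk⟩ :=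
    exists_pow_eq_self_of_coprime (hmn.coprime_dvd_right (orderOf_dvd_of_pow_eq_one hx))
  exact hk ▸ pow_mem h k

theorem SemidirectProduct.pow_eq_mk_of_aut_eq_one {N G : Type*} [Group N] [Group G]
    {φ : G →* MulAut N} (x : N ⋊[φ] G) (hx : φ x.right = 1) (k : ℕ) :
    x ^ k = ⟨x.left ^ k, x.right ^ k⟩ := by
  have hcomm : Commute (inl x.left : N ⋊[φ] G) (inr x.right) := by
    ext <;> simp [hx]
  rw [← inl_left_mul_inr_right x, hcomm.mul_pow, ← map_pow, ← map_pow, mk_eq_inl_mul_inr]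
  simp

theorem DihedralGroup.commutatorElement_r_sr_s7 {n : ℕ} (i j : ZMod n) :
    ⁅DihedralGroup.r i, DihedralGroup.sr j⁆ = DihedralGroup.r i ^ 2 := by
  simp only [commutatorElement_def, DihedralGroup.inv_r, DihedralGroup.inv_sr,
    DihedralGroup.r_mul_sr, DihedralGroup.sr_mul_r, DihedralGroup.sr_mul_sr, DihedralGroup.r_pow]
  congr 1
  ring

theorem exists_r_of_mem_ker_dihedralSign {p : ℕ} {g : DihedralGroup p} (hg : g ∈ (dihedralSign p).ker) :
    ∃ i, g = DihedralGroup.r i := by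
  cases g with
  | r i => exact ⟨i, rfl⟩
  | sr i => exact absurd (show (-1 : ℤˣ) = 1 from hg) (by decide)

theorem Multiplicative.zmod_pow_self (q : ℕ) (c : Multiplicative (ZMod q)) : c ^ q = 1 := by
  apply Multiplicative.toAdd.injective
  rw [toAdd_pow, toAdd_one, nsmul_eq_mul, ZMod.natCast_self, zero_mul]

theorem Wact_commutatorElement (p q : ℕ) (x y : DihedralGroup p × DihedralGroup p) :
    Wact p q ⁅x, y⁆ = 1 := by
  rw [Wact, MonoidHom.comp_apply, map_commutatorElement,
    commutatorElement_eq_one_iff_mul_comm.mpr (mul_comm _ _), map_one]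

theorem Wgrp.left_commutatorElement_pow_self (p q : ℕ) (x y : Wgrp p q) :
    (⁅x, y⁆ ^ q).left = 1 := by
  rw [SemidirectProduct.pow_eq_mk_of_aut_eq_one]
  · exact Multiplicative.zmod_pow_self q _
  · exact (congrArg (Wact p q) (map_commutatorElement SemidirectProduct.rightHom x y)).trans
      (Wact_commutatorElement p q _ _)

section Coordinates

variable {p q : ℕ} {V I : Type} {R : Set (V × V)}

theorem eProjK_right (x : ↥(GGamma p q V R) × (I → ℤˣ)) (e : R) :
    (eProjK p q V R I e x).right = (vProjK p q V R I (e : V × V).1 x,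
      vProjK p q V R I (e : V × V).2 x) :=
  x.1.2 e

theorem GGammaK_ext {x y : ↥(GGamma p q V R) × (I → ℤˣ)}
    (hv : ∀ w, vProjK p q V R I w x = vProjK p q V R I w y)
    (he : ∀ e, (eProjK p q V R I e x).left = (eProjK p q V R I e y).left) (hI : x.2 = y.2) :
    x = y := by
  refine Prod.ext (Subtype.ext (Prod.ext (funext hv) (funext fun e => ?_))) hI
  have hright := eProjK_right x e
  rw [hv, hv, ← eProjK_right] at hright
  exact SemidirectProduct.ext (he e) hright

variable [DecidableEq V]

theorem vProjK_vertEmbK (v w : V) (g : DihedralGroup p) :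
    vProjK p q V R I w (vertEmbK p q V R I v g) = if w = v then g else 1 := by
  show (if w = v then MonoidHom.id (DihedralGroup p) else 1) g = _
  split_ifs <;> rfl

theorem left_eProjK_vertEmbK (v : V) (e : R) (g : DihedralGroup p) :
    (eProjK p q V R I e (vertEmbK p q V R I v g)).left = 1 :=
  rfl

theorem snd_vertEmbK (v : V) (g : DihedralGroup p) : (vertEmbK p q V R I v g).2 = 1 :=
  rfl

theorem commutatorElement_vertEmbK_sr_pow (v : V) (i : ZMod p)
    (n : ↥(GGamma p q V R) × (I → ℤˣ)) (hn : vProjK p q V R I v n = DihedralGroup.r i) :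
    ⁅n, vertEmbK p q V R I v (DihedralGroup.sr 0)⁆ ^ q
      = vertEmbK p q V R I v (DihedralGroup.r i) ^ (2 * q) := by
  refine GGammaK_ext (fun w => ?_) (fun e => ?_) ?_
  · simp only [map_pow, map_commutatorElement, vProjK_vertEmbK]
    by_cases hw : w = v
    · subst hw
      rw [if_pos rfl, if_pos rfl, hn, DihedralGroup.commutatorElement_r_sr_s7, pow_mul]
    · simp [hw]
  · rw [map_pow, map_commutatorElement, Wgrp.left_commutatorElement_pow_self, ← map_pow,
      left_eProjK_vertEmbK]
  · simp [commutatorElement_def, snd_vertEmbK]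

end Coordinates

theorem statement_7_general (p q : ℕ) (hp : p.Prime) (hq : q.Prime) (hpo : Odd p)
    (hpq : p ≠ q) (V I : Type) [DecidableEq V] (R : Set (V × V))
    (N : Subgroup (↥(GGamma p q V R) × (I → ℤˣ))) [N.Normal] (v : V)
    (h : (dihedralSign p).ker ≤ N.map (vProjK p q V R I v)) :
    ((dihedralSign p).ker).map (vertEmbK p q V R I v) ≤ N := by
  rintro _ ⟨g, hg, rfl⟩
  obtain ⟨i, rfl⟩ := exists_r_of_mem_ker_dihedralSign hg
  obtain ⟨n, hnN, hn⟩ := h hg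
  have hcomm : ⁅n, vertEmbK p q V R I v (DihedralGroup.sr 0)⁆ ∈ N :=
    Subgroup.commutator_le_left N ⊤ (Subgroup.commutator_mem_commutator hnN (Subgroup.mem_top _))
  have hcop : (2 * q).Coprime p :=
    Nat.Coprime.mul_left (Nat.coprime_comm.mp (Nat.coprime_two_right.mpr hpo))
      ((Nat.coprime_primes hq hp).mpr hpq.symm)
  refine Subgroup.mem_of_pow_mem_of_coprime ?_ hcop
    (commutatorElement_vertEmbK_sr_pow v i n hn ▸ pow_mem hcomm q)
  rw [← map_pow, DihedralGroup.r_pow, ZMod.natCast_self, mul_zero, DihedralGroup.r_zero, map_one]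

/-- Let `Γ = (V, R)` be a graph, `I` a set, and `N` an open normal subgroup
of `G_Γ × C_2^I`.  If `π_v(N) ⊇ C_p` for some vertex `v`, then `(C_p)_v ⊆ N`, where
`(C_p)_v` is the image of `C_p = ker τ` under the embedding `g ↦ (g)_v`. -/
theorem statement_7 (p q : ℕ) (hp : p.Prime) (hq : q.Prime) (hpo : Odd p) (hqo : Odd q)
    (hpq : p ≠ q) (V I : Type) [DecidableEq V] (R : Set (V × V))
    (hloop : ∀ v : V, (v, v) ∉ R) (hor : ∀ a b : V, (a, b) ∈ R → (b, a) ∉ R)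
    (N : Subgroup (↥(GGamma p q V R) × (I → ℤˣ))) [N.Normal]
    (hNo : IsOpen (N : Set (↥(GGamma p q V R) × (I → ℤˣ)))) (v : V)
    (h : (dihedralSign p).ker ≤ N.map (vProjK p q V R I v)) :
    ((dihedralSign p).ker).map (vertEmbK p q V R I v) ≤ N :=
  statement_7_general p q hp hq hpo hpq V I R N v h
end

section
/- Let Γ = (V,R) be a graph, I a set, and N a normal subgroup of G_Γ × C_2^I with N ∩ C_q^R = 1, where C_q^R is the subgroup of elements that are of the form (x,1,1) ∈ W in each edge coordinate and the identity in all vertex and I coordinates. Then every element ((a_v)_{v∈V}, (b_r)_{r∈R}, (c_i)_{i∈I}) of N satisfies: for every edge r = (v,v') ∈ R, τ(a_v) = τ(a_{v'}) and b_r = (1, a_v, a_{v'}). -/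
open Function

/-! Fix `x ∈ N` and an edge `r = (v, v')`. The subgroup `C_q^R` contains the kernel of the map
forgetting the edge coordinates, so `N` meets that kernel trivially. Hence `x` commutes with the
copy of `C_q` at `r`, so `λ(b_r)` acts trivially on `C_q`, i.e. `τ(a_v) τ(a_{v'}) = 1`. Next,
commute `x` with a reflection placed at the vertex `v`: the commutator lies in `N`, and after
forgetting edges it has exponent `p`, because commutators in `D_p` are rotations; so its `p`-th
power is trivial. At the edge `r` this commutator has `C_q`-component `b_r.left⁻¹ ^ 2` and acts
trivially on `C_q`, so `b_r.left ^ (2p) = 1`, and `b_r.left = 1` as `q ∤ 2p`. -/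

open scoped commutatorElement

namespace Subgroup

variable {G H : Type*} [Group G] [Group H] {N : Subgroup G} [N.Normal] {f : G →* H}

theorem commute_of_inf_ker_eq_bot (hN : N ⊓ f.ker = ⊥) {x y : G} (hx : x ∈ N)
    (hy : f y = 1) : Commute x y := by
  rw [← commutatorElement_eq_one_iff_commute]
  refine disjoint_def.mp (disjoint_iff.mpr hN)
    (commutator_le_left N ⊤ (commutator_mem_commutator hx (mem_top y))) ?_
  rw [MonoidHom.mem_ker, map_commutatorElement, hy, commutatorElement_one_right]

theorem commutatorElement_pow_eq_one_of_inf_ker_eq_bot (hN : N ⊓ f.ker = ⊥) {x y : G}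
    (hy : y ∈ N) {n : ℕ} (hn : f ⁅x, y⁆ ^ n = 1) : ⁅x, y⁆ ^ n = 1 :=
  disjoint_def.mp (disjoint_iff.mpr hN)
    (pow_mem (commutator_le_right ⊤ N (commutator_mem_commutator (mem_top x) hy)) n)
    (by rwa [MonoidHom.mem_ker, map_pow])

end Subgroup

namespace DihedralGroup

variable {p : ℕ}

theorem dihedralSign_sr (i : ZMod p) : dihedralSign p (sr i) = -1 := rfl

theorem dihedralSign_commutatorElement (g d : DihedralGroup p) : dihedralSign p ⁅g, d⁆ = 1 := by
  rw [map_commutatorElement, commutatorElement_eq_one_iff_commute]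
  exact Commute.all _ _

theorem dihedralSign_commutatorElement_fst_mul_snd (u v : DihedralGroup p × DihedralGroup p) :
    dihedralSign p ⁅u, v⁆.1 * dihedralSign p ⁅u, v⁆.2 = 1 := by
  change dihedralSign p ⁅u.1, v.1⁆ * dihedralSign p ⁅u.2, v.2⁆ = 1
  rw [dihedralSign_commutatorElement, dihedralSign_commutatorElement, one_mul]

theorem pow_eq_one_of_dihedralSign_eq_one {d : DihedralGroup p} (hd : dihedralSign p d = 1) :
    d ^ p = 1 := by
  cases d with
  | r i => rw [r_pow, ZMod.natCast_self, mul_zero, one_def]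
  | sr i => exact absurd hd (by simp [dihedralSign_sr])

theorem commutatorElement_pow_eq_one (g d : DihedralGroup p) : ⁅g, d⁆ ^ p = 1 :=
  pow_eq_one_of_dihedralSign_eq_one (dihedralSign_commutatorElement g d)

end DihedralGroup

section Wgrp

open SemidirectProduct DihedralGroup

variable {p q : ℕ}

theorem wact_apply (u : DihedralGroup p × DihedralGroup p) (t : Multiplicative (ZMod q)) :
    Wact p q u t = t ^ ((dihedralSign p u.1 * dihedralSign p u.2 : ℤˣ) : ℤ) := rfl

theorem dihedralSign_right_eq_of_commute_inl {w : Wgrp p q} {t : Multiplicative (ZMod q)}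
    (ht : t⁻¹ ≠ t) (h : Commute w (inl t)) :
    dihedralSign p w.right.1 = dihedralSign p w.right.2 := by
  have hfix : Wact p q w.right t = t := by
    simpa [mul_comm w.left] using congrArg SemidirectProduct.left h.eq
  rw [wact_apply] at hfix
  rcases Int.units_eq_one_or (dihedralSign p w.right.1) with h1 | h1 <;>
    rcases Int.units_eq_one_or (dihedralSign p w.right.2) with h2 | h2 <;>
    simp_all

theorem left_pow_of_dihedralSign_mul_eq_one {w : Wgrp p q}
    (hw : dihedralSign p w.right.1 * dihedralSign p w.right.2 = 1) (n : ℕ) :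
    (w ^ n).left = w.left ^ n := by
  induction n with
  | zero => rw [pow_zero, pow_zero, one_left]
  | succ n ih =>
    have hwn : dihedralSign p (w ^ n).right.1 * dihedralSign p (w ^ n).right.2 = 1 := by
      rw [← rightHom_eq_right, map_pow, Prod.pow_fst, Prod.pow_snd, map_pow, map_pow, ← mul_pow,
        rightHom_eq_right, hw, one_pow]
    rw [pow_succ, mul_left, ih, wact_apply, hwn, pow_succ, Units.val_one, zpow_one]

theorem commutatorElement_inr_left {s : DihedralGroup p} (hs : dihedralSign p s = -1)
    (w : Wgrp p q) : ⁅(inr (s, 1) : Wgrp p q), w⁆.left = w.left⁻¹ ^ 2 := by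
  rcases Int.units_eq_one_or (dihedralSign p w.right.1) with h1 | h1 <;>
    rcases Int.units_eq_one_or (dihedralSign p w.right.2) with h2 | h2 <;>
    simp [commutatorElement_def, wact_apply, hs, h1, h2, pow_two]

theorem left_eq_one_of_commutatorElement_inr_pow_eq_one {s : DihedralGroup p}
    (hs : dihedralSign p s = -1) (hpq : (2 * p).Coprime q) {w : Wgrp p q}
    (h : ⁅(inr (s, 1) : Wgrp p q), w⁆ ^ p = 1) : w.left = 1 := by
  have hsign : dihedralSign p ⁅(inr (s, 1) : Wgrp p q), w⁆.right.1 *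
      dihedralSign p ⁅(inr (s, 1) : Wgrp p q), w⁆.right.2 = 1 := by
    rw [← rightHom_eq_right, map_commutatorElement]
    exact dihedralSign_commutatorElement_fst_mul_snd _ _
  have h2p : w.left⁻¹ ^ (2 * p) = 1 := by
    rw [pow_mul, ← commutatorElement_inr_left hs, ← left_pow_of_dihedralSign_mul_eq_one hsign,
      h]
    rfl
  have hq : w.left⁻¹ ^ q = 1 := by
    rw [← ofAdd_toAdd (w.left⁻¹ ^ q), toAdd_pow, nsmul_eq_mul, ZMod.natCast_self, zero_mul,
      ofAdd_zero]
  exact inv_eq_one.mp ((pow_eq_one_iff_of_coprime hpq).mp ⟨h2p, hq⟩)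

end Wgrp

section GGamma

open SemidirectProduct

variable (p q : ℕ) (V : Type*) (R : Set (V × V)) (I : Type*)

def forgetEdges :
    ↥(GGamma p q V R) × (I → ℤˣ) →* (V → DihedralGroup p) × (I → ℤˣ) :=
  ((MonoidHom.fst _ _).comp (GGamma p q V R).subtype).prodMap (MonoidHom.id _)

variable {p q V R I}

theorem ker_forgetEdges_le_range_cqREmbK :
    (forgetEdges p q V R I).ker ≤ (cqREmbK p q V R I).range := by
  rintro z hz
  obtain ⟨hvert, hI⟩ := Prod.mk_eq_one.mp hz
  refine ⟨fun r => ((z.1 : (V → DihedralGroup p) × (R → Wgrp p q)).2 r).left,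
    Prod.ext (Subtype.ext (Prod.ext hvert.symm (funext fun r => ?_))) hI.symm⟩
  have hright : ((z.1 : (V → DihedralGroup p) × (R → Wgrp p q)).2 r).right = 1 := by
    rw [← rightHom_eq_right, z.1.2 r]
    exact congrArg (fun a : V → DihedralGroup p => (a (r : V × V).1, a (r : V × V).2)) hvert
  exact SemidirectProduct.ext rfl hright.symm

theorem forgetEdges_edgeEmbK [DecidableEq V] (r : R) (t : Multiplicative (ZMod q)) :
    forgetEdges p q V R I (edgeEmbK p q V R I r t) = 1 := rfl

theorem forgetEdges_commutatorElement_pow_eq_one (y z : ↥(GGamma p q V R) × (I → ℤˣ)) :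
    forgetEdges p q V R I ⁅y, z⁆ ^ p = 1 := by
  rw [map_commutatorElement]
  refine Prod.ext (funext fun v => DihedralGroup.commutatorElement_pow_eq_one _ _) ?_
  change ⁅(forgetEdges p q V R I y).2, (forgetEdges p q V R I z).2⁆ ^ p = 1
  rw [commutatorElement_eq_one_iff_commute.mpr (Commute.all _ _), one_pow]

theorem eProjK_edgeEmbK_self [DecidableEq V] (r : R) (t : Multiplicative (ZMod q)) :
    eProjK p q V R I r (edgeEmbK p q V R I r t) = inl t := by
  change (if r = r then inl else 1 : Multiplicative (ZMod q) →* Wgrp p q) t = inl t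
  rw [if_pos rfl]

theorem eProjK_vertEmbK_of_fst_eq [DecidableEq V] {v : V} {r : R} (h1 : (r : V × V).1 = v)
    (h2 : (r : V × V).2 ≠ v) (g : DihedralGroup p) :
    eProjK p q V R I r (vertEmbK p q V R I v g) = inr (g, 1) := by
  change inr ((if (r : V × V).1 = v then MonoidHom.id _ else 1) g,
    (if (r : V × V).2 = v then MonoidHom.id _ else 1) g) = _
  rw [if_pos h1, if_neg h2]
  rfl

end GGamma

theorem statement_9_general (p q : ℕ) (hp : p.Prime) (hq : q.Prime) (hqo : Odd q)
    (hpq : p ≠ q) (V I : Type) (R : Set (V × V))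
    (hloop : ∀ v : V, (v, v) ∉ R)
    (N : Subgroup (↥(GGamma p q V R) × (I → ℤˣ))) [N.Normal]
    (hN : N ⊓ (cqREmbK p q V R I).range = ⊥) :
    ∀ x ∈ N, ∀ r : R,
      dihedralSign p ((x.1 : (V → DihedralGroup p) × (R → Wgrp p q)).1 (r : V × V).1) =
        dihedralSign p ((x.1 : (V → DihedralGroup p) × (R → Wgrp p q)).1 (r : V × V).2) ∧
      (x.1 : (V → DihedralGroup p) × (R → Wgrp p q)).2 r =
        SemidirectProduct.inr
          ((x.1 : (V → DihedralGroup p) × (R → Wgrp p q)).1 (r : V × V).1,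
           (x.1 : (V → DihedralGroup p) × (R → Wgrp p q)).1 (r : V × V).2) := by
  classical
  intro x hx r
  have hq2 : q ≠ 2 := by rintro rfl; exact absurd hqo (by decide)
  have : Fact (2 < q) := ⟨hq.two_le.lt_of_ne' hq2⟩
  have hNker : N ⊓ (forgetEdges p q V R I).ker = ⊥ :=
    le_bot_iff.mp (hN ▸ inf_le_inf_left N ker_forgetEdges_le_range_cqREmbK)
  have hright : (eProjK p q V R I r x).right = (x.1.1.1 (r : V × V).1, x.1.1.1 (r : V × V).2) :=
    x.1.2 r
  have hcomm :
      Commute (eProjK p q V R I r x) (SemidirectProduct.inl (Multiplicative.ofAdd 1)) := by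
    simpa only [eProjK_edgeEmbK_self] using (Subgroup.commute_of_inf_ker_eq_bot hNker hx
      (forgetEdges_edgeEmbK r (Multiplicative.ofAdd 1))).map (eProjK p q V R I r)
  have hsign := dihedralSign_right_eq_of_commute_inl
    (by rw [← ofAdd_neg, Ne, Multiplicative.ofAdd.injective.eq_iff]; exact ZMod.neg_one_ne_one)
    hcomm
  have hpow : ⁅(SemidirectProduct.inr (DihedralGroup.sr 0, 1) : Wgrp p q),
      eProjK p q V R I r x⁆ ^ p = 1 := by
    have hv' : (r : V × V).2 ≠ (r : V × V).1 := fun h =>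
      hloop (r : V × V).1 (by convert r.2 using 1; exact Prod.ext rfl h.symm)
    rw [← eProjK_vertEmbK_of_fst_eq rfl hv', ← map_commutatorElement, ← map_pow,
      Subgroup.commutatorElement_pow_eq_one_of_inf_ker_eq_bot hNker hx
        (forgetEdges_commutatorElement_pow_eq_one _ _), map_one]
  have hleft := left_eq_one_of_commutatorElement_inr_pow_eq_one (DihedralGroup.dihedralSign_sr 0)
    (Nat.Coprime.mul ((Nat.coprime_primes Nat.prime_two hq).mpr hq2.symm)
      ((Nat.coprime_primes hp hq).mpr hpq)) hpow
  rw [hright] at hsign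
  exact ⟨hsign, SemidirectProduct.ext hleft hright⟩

/-- Let `Γ = (V, R)` be a graph, `I` a set, and `N` a normal subgroup of
`G_Γ × C_2^I` with `N ∩ C_q^R = 1`, where `C_q^R` is the subgroup of elements of the form
`(x,1,1) ∈ W` in each edge coordinate and the identity in all vertex and `I` coordinates.
Then every element of `N` satisfies: for every edge `r = (v, v')`, `τ(a_v) = τ(a_{v'})` and
`b_r = (1, a_v, a_{v'})`. -/
theorem statement_9 (p q : ℕ) (hp : p.Prime) (hq : q.Prime) (hpo : Odd p) (hqo : Odd q)
    (hpq : p ≠ q) (V I : Type) (R : Set (V × V))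
    (hloop : ∀ v : V, (v, v) ∉ R) (hor : ∀ a b : V, (a, b) ∈ R → (b, a) ∉ R)
    (N : Subgroup (↥(GGamma p q V R) × (I → ℤˣ))) [N.Normal]
    (hN : N ⊓ (cqREmbK p q V R I).range = ⊥) :
    ∀ x ∈ N, ∀ r : R,
      dihedralSign p ((x.1 : (V → DihedralGroup p) × (R → Wgrp p q)).1 (r : V × V).1) =
        dihedralSign p ((x.1 : (V → DihedralGroup p) × (R → Wgrp p q)).1 (r : V × V).2) ∧
      (x.1 : (V → DihedralGroup p) × (R → Wgrp p q)).2 r =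
        SemidirectProduct.inr
          ((x.1 : (V → DihedralGroup p) × (R → Wgrp p q)).1 (r : V × V).1,
           (x.1 : (V → DihedralGroup p) × (R → Wgrp p q)).1 (r : V × V).2) :=
  statement_9_general p q hp hq hqo hpq V I R hloop N hN
end

section
/- Let Γ = (V,R) be a graph and let S = ker(ξ_Γ), the product of the p-Sylow and q-Sylow subgroups of G_Γ. If N is a proper closed normal subgroup of G_Γ, then NS is also a proper normal subgroup of G_Γ. -/
open Function

/-!
Suppose `N ⊔ S = G_Γ`, where `S = ker ξ_Γ`. Since `N` is closed, a point `g ∉ N` stays outside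
`M = N ⊔ C` for some open normal subgroup `C` of elements that are trivial on finitely many
coordinates. As `S` is abelian and `M ⊔ S = G_Γ`, the quotient `G_Γ ⧸ M` is abelian, so `M`
contains the commutator subgroup. But modulo `C` every element of `S` is a product of commutators:
`G_Γ = C_q^R ⋊ D_p^V`, a family of rotations is inverted by the reflection at every vertex, the
`C_q`-coordinate on a single edge `(v, w)` with `v ≠ w` is inverted by a reflection at `v` alone,
and an element of odd order inverted by a conjugation is a power of a commutator. Hence `S ≤ M`,
so `M = G_Γ ∋ g`, a contradiction.
-/

open DihedralGroup SemidirectProduct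

section Groups

open scoped commutatorElement

variable {G : Type*} [Group G]

lemma mem_commutator_of_conj_eq_inv {g x : G} {n : ℕ} (hn : Odd n) (hx : x ^ n = 1)
    (hconj : g * x * g⁻¹ = x⁻¹) : x ∈ commutator G := by
  obtain ⟨k, rfl⟩ := hn
  have hcomm : ⁅g, x⁆ = (x ^ 2)⁻¹ := by
    rw [commutatorElement_def, hconj]
    group
  have hx' : x = ⁅g, x⁆ ^ k * x ^ (2 * k + 1) := by
    rw [hcomm]
    group
  rw [hx', hx, mul_one]
  exact pow_mem (Subgroup.commutator_mem_commutator (Subgroup.mem_top g) (Subgroup.mem_top x)) k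

lemma commutator_le_of_sup_eq_top {M A : Subgroup G} [M.Normal] (h : M ⊔ A = ⊤)
    (hA : ⁅A, A⁆ ≤ M) : commutator G ≤ M := by
  rw [← QuotientGroup.ker_mk' M, ← Subgroup.map_eq_bot_iff, commutator_def, ← h,
    Subgroup.map_commutator, Subgroup.map_sup,
    (Subgroup.map_eq_bot_iff M).mpr (QuotientGroup.ker_mk' M).ge, bot_sup_eq,
    ← Subgroup.map_commutator, Subgroup.map_eq_bot_iff, QuotientGroup.ker_mk']
  exact hA

end Groups

section Dihedral

variable {p : ℕ}

@[simp]
lemma dihedralSign_r (i : ZMod p) : dihedralSign p (r i) = 1 := rfl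

@[simp]
lemma dihedralSign_sr (i : ZMod p) : dihedralSign p (sr i) = -1 := rfl

lemma DihedralGroup.exists_eq_r_of_dihedralSign_eq_one {x : DihedralGroup p}
    (hx : dihedralSign p x = 1) : ∃ i, x = r i := by
  cases x with
  | r i => exact ⟨i, rfl⟩
  | sr i => simp at hx

lemma DihedralGroup.commute_of_dihedralSign_eq_one {x y : DihedralGroup p}
    (hx : dihedralSign p x = 1) (hy : dihedralSign p y = 1) : Commute x y := by
  obtain ⟨i, rfl⟩ := exists_eq_r_of_dihedralSign_eq_one hx
  obtain ⟨j, rfl⟩ := exists_eq_r_of_dihedralSign_eq_one hy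
  simp [Commute, SemiconjBy, add_comm]

lemma DihedralGroup.pow_eq_one_of_dihedralSign_eq_one_s10 {x : DihedralGroup p}
    (hx : dihedralSign p x = 1) : x ^ p = 1 := by
  obtain ⟨i, rfl⟩ := exists_eq_r_of_dihedralSign_eq_one hx
  simp

lemma DihedralGroup.sr_conj_of_dihedralSign_eq_one {x : DihedralGroup p}
    (hx : dihedralSign p x = 1) (j : ZMod p) : sr j * x * (sr j)⁻¹ = x⁻¹ := by
  obtain ⟨i, rfl⟩ := exists_eq_r_of_dihedralSign_eq_one hx
  simp

end Dihedral

lemma SemidirectProduct.commute_of_right {N G : Type*} [CommGroup N] [Group G]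
    {φ : G →* MulAut N} {a b : N ⋊[φ] G} (ha : φ a.right = 1) (hb : φ b.right = 1)
    (h : Commute a.right b.right) : Commute a b := by
  ext <;> simp [ha, hb, mul_comm, h.eq]

section Wact

variable {p q : ℕ}

lemma Wact_apply (h : DihedralGroup p × DihedralGroup p) (c : Multiplicative (ZMod q)) :
    Wact p q h c = c ^ ((dihedralSign p h.1 * dihedralSign p h.2 : ℤˣ) : ℤ) := rfl

lemma Wact_eq_one {x y : DihedralGroup p} (hx : dihedralSign p x = 1)
    (hy : dihedralSign p y = 1) : Wact p q (x, y) = 1 := by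
  ext c
  simp [Wact_apply, hx, hy]

lemma Wact_sr_one (i : ZMod p) (c : Multiplicative (ZMod q)) : Wact p q (sr i, 1) c = c⁻¹ := by
  simp [Wact_apply]

lemma Multiplicative.zmod_pow_eq_one (c : Multiplicative (ZMod q)) : c ^ q = 1 := by
  apply Multiplicative.toAdd.injective
  rw [toAdd_pow, nsmul_eq_mul, ZMod.natCast_self, zero_mul]
  rfl

end Wact

namespace GGamma

variable {p q : ℕ} {V : Type*} {R : Set (V × V)}

local notation "πᵥ" => vProj _ _ _ _
local notation "πₑ" => eProj _ _ _ _

lemma ext {x y : GGamma p q V R} (hV : ∀ v, πᵥ v x = πᵥ v y) (hR : ∀ e, πₑ e x = πₑ e y) :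
    x = y :=
  Subtype.ext (Prod.ext (funext hV) (funext hR))

lemma eProj_right (x : GGamma p q V R) (e : R) : (πₑ e x).right = (πᵥ e.1.1 x, πᵥ e.1.2 x) :=
  x.2 e

def vertexLift : (V → DihedralGroup p) →* GGamma p q V R :=
  ((MonoidHom.id _).prod (MonoidHom.pi fun e : R =>
      inr.comp ((Pi.evalMonoidHom _ e.1.1).prod (Pi.evalMonoidHom _ e.1.2)))).codRestrict _
    fun a e => by simp

def ofEdges : (R → Multiplicative (ZMod q)) →* GGamma p q V R :=
  ((1 : (R → Multiplicative (ZMod q)) →* (V → DihedralGroup p)).prod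
      (MonoidHom.pi fun e : R => inl.comp (Pi.evalMonoidHom _ e))).codRestrict _
    fun c e => by simp [Prod.ext_iff]

@[simp]
lemma vProj_vertexLift (a : V → DihedralGroup p) (v : V) :
    πᵥ v (vertexLift (q := q) (R := R) a) = a v := rfl

@[simp]
lemma eProj_vertexLift (a : V → DihedralGroup p) (e : R) :
    πₑ e (vertexLift (q := q) a) = inr (a e.1.1, a e.1.2) := rfl

@[simp]
lemma vProj_ofEdges (c : R → Multiplicative (ZMod q)) (v : V) :
    πᵥ v (ofEdges (p := p) c) = 1 := rfl

@[simp]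
lemma eProj_ofEdges (c : R → Multiplicative (ZMod q)) (e : R) :
    πₑ e (ofEdges (p := p) c) = inl (c e) := rfl

lemma ofEdges_mul_vertexLift (x : GGamma p q V R) :
    ofEdges (fun e => (πₑ e x).left) * vertexLift (fun v => πᵥ v x) = x := by
  refine ext (fun v => ?_) fun e => ?_
  · simp
  · simp [← eProj_right]

lemma vertexLift_conj_ofEdges (a : V → DihedralGroup p) (c : R → Multiplicative (ZMod q)) :
    vertexLift a * ofEdges c * (vertexLift a)⁻¹ =
      ofEdges fun e => Wact p q (a e.1.1, a e.1.2) (c e) := by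
  refine ext (fun v => ?_) fun e => ?_
  · simp
  · simp only [map_mul, map_inv, eProj_vertexLift, eProj_ofEdges]
    rw [← map_inv, inl_aut]

lemma mem_ker_xiGamma {x : GGamma p q V R} :
    x ∈ (xiGamma p q V R).ker ↔ ∀ v, dihedralSign p (πᵥ v x) = 1 := by
  rw [MonoidHom.mem_ker, funext_iff]
  rfl

lemma commutator_ker_xiGamma :
    ⁅(xiGamma p q V R).ker, (xiGamma p q V R).ker⁆ = ⊥ := by
  rw [Subgroup.commutator_eq_bot_iff_le_centralizer]
  intro s hs t ht
  rw [mem_ker_xiGamma] at hs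
  rw [SetLike.mem_coe, mem_ker_xiGamma] at ht
  refine ext (fun v => ?_) fun e => ?_
  · simp only [map_mul, (commute_of_dihedralSign_eq_one (ht v) (hs v)).eq]
  · simp only [map_mul]
    refine (SemidirectProduct.commute_of_right ?_ ?_ ?_).eq <;>
      simp only [eProj_right, Wact_eq_one, ht, hs]
    exact (commute_of_dihedralSign_eq_one (ht _) (hs _)).prod
      (commute_of_dihedralSign_eq_one (ht _) (hs _))

lemma vertexLift_mem_commutator (hp : Odd p) {a : V → DihedralGroup p}
    (ha : ∀ v, dihedralSign p (a v) = 1) :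
    vertexLift a ∈ commutator (GGamma p q V R) := by
  refine mem_commutator_of_conj_eq_inv hp (g := vertexLift fun _ => sr 0) ?_ ?_
  · rw [← map_pow, show a ^ p = 1 from funext fun v => pow_eq_one_of_dihedralSign_eq_one_s10 (ha v),
      map_one]
  · rw [← map_inv, ← map_mul, ← map_mul, ← map_inv]
    congr 1
    funext v
    exact sr_conj_of_dihedralSign_eq_one (ha v) 0

open scoped Classical in
lemma ofEdges_mulSingle_mem_commutator (hq : Odd q) (hloop : ∀ v : V, (v, v) ∉ R) (e : R)
    (c : Multiplicative (ZMod q)) :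
    ofEdges (p := p) (Pi.mulSingle e c) ∈ commutator (GGamma p q V R) := by
  have hne : e.1.2 ≠ e.1.1 := fun h =>
    hloop e.1.1 ((Prod.ext rfl h.symm : ((e : V × V).1, (e : V × V).1) = e) ▸ e.2)
  refine mem_commutator_of_conj_eq_inv hq (g := vertexLift (Pi.mulSingle e.1.1 (sr 0))) ?_ ?_
  · rw [← map_pow, ← Pi.mulSingle_pow, Multiplicative.zmod_pow_eq_one, Pi.mulSingle_one, map_one]
  · rw [vertexLift_conj_ofEdges, ← map_inv]
    congr 1
    funext e'
    by_cases h : e' = e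
    · subst h
      simp [hne, Wact_sr_one]
    · simp [h]

def cylinderSubgroup (FV : Finset V) (FR : Finset R) : Subgroup (GGamma p q V R) where
  carrier := {x | (∀ v ∈ FV, πᵥ v x = 1) ∧ ∀ e ∈ FR, πₑ e x = 1}
  one_mem' := ⟨fun _ _ => map_one _, fun _ _ => map_one _⟩
  mul_mem' := by
    rintro x y ⟨hxV, hxR⟩ ⟨hyV, hyR⟩
    exact ⟨fun v hv => by rw [map_mul, hxV v hv, hyV v hv, one_mul],
      fun e he => by rw [map_mul, hxR e he, hyR e he, one_mul]⟩
  inv_mem' := by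
    rintro x ⟨hxV, hxR⟩
    exact ⟨fun v hv => by rw [map_inv, hxV v hv, inv_one],
      fun e he => by rw [map_inv, hxR e he, inv_one]⟩

instance (FV : Finset V) (FR : Finset R) : (cylinderSubgroup (p := p) (q := q) FV FR).Normal where
  conj_mem := by
    rintro x ⟨hxV, hxR⟩ g
    exact ⟨fun v hv => by rw [map_mul, map_mul, hxV v hv, mul_one, map_inv, mul_inv_cancel],
      fun e he => by rw [map_mul, map_mul, hxR e he, mul_one, map_inv, mul_inv_cancel]⟩

lemma exists_mul_cylinderSubgroup_subset {U : Set (GGamma p q V R)} (hU : IsOpen U)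
    {g : GGamma p q V R} (hg : g ∈ U) : ∃ FV FR, ∀ c ∈ cylinderSubgroup FV FR, g * c ∈ U := by
  obtain ⟨O, hO, rfl⟩ := isOpen_induced_iff.mp hU
  obtain ⟨u, w, hu, hw, hgu, hgw, huw⟩ := isOpen_prod_iff.mp hO _ _ hg
  obtain ⟨FV, uu, huu, hFV⟩ := isOpen_pi_iff.mp hu _ hgu
  obtain ⟨FR, ww, hww, hFR⟩ := isOpen_pi_iff.mp hw _ hgw
  refine ⟨FV, FR, fun c ⟨hcV, hcR⟩ => huw ⟨hFV fun v hv => ?_, hFR fun e he => ?_⟩⟩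
  · change πᵥ v (g * c) ∈ uu v
    rw [map_mul, hcV v hv, mul_one]
    exact (huu v hv).2
  · change πₑ e (g * c) ∈ ww e
    rw [map_mul, hcR e he, mul_one]
    exact (hww e he).2

lemma exists_notMem_sup_cylinderSubgroup {N : Subgroup (GGamma p q V R)}
    (hN : IsClosed (N : Set (GGamma p q V R))) {g : GGamma p q V R} (hg : g ∉ N) :
    ∃ FV FR, g ∉ N ⊔ cylinderSubgroup FV FR := by
  obtain ⟨FV, FR, h⟩ := exists_mul_cylinderSubgroup_subset hN.isOpen_compl hg
  refine ⟨FV, FR, fun hg' => ?_⟩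
  rw [← SetLike.mem_coe, Subgroup.mul_normal] at hg'
  obtain ⟨n, hn, c, hc, rfl⟩ := hg'
  exact h c⁻¹ (inv_mem hc) (by simpa using hn)

lemma ker_xiGamma_le_commutator_sup_cylinderSubgroup (hp : Odd p) (hq : Odd q)
    (hloop : ∀ v : V, (v, v) ∉ R) (FV : Finset V) (FR : Finset R) :
    (xiGamma p q V R).ker ≤ commutator (GGamma p q V R) ⊔ cylinderSubgroup FV FR := by
  classical
  intro s hs
  rw [← ofEdges_mul_vertexLift s]
  set c : R → Multiplicative (ZMod q) := fun e => (πₑ e s).left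
  set c' : R → Multiplicative (ZMod q) := ∏ e ∈ FR, Pi.mulSingle e (c e)
  have hc' : c' ∈ (commutator (GGamma p q V R)).comap ofEdges :=
    Subgroup.prod_mem _ fun e _ => ofEdges_mulSingle_mem_commutator hq hloop e (c e)
  have hcc' : ofEdges (c * c'⁻¹) ∈ cylinderSubgroup (p := p) FV FR :=
    ⟨fun v _ => rfl, fun e he => by simp [c', he]⟩
  rw [← inv_mul_cancel_right c c', map_mul]
  exact mul_mem (mul_mem (Subgroup.mem_sup_right hcc') (Subgroup.mem_sup_left hc'))
    (Subgroup.mem_sup_left (vertexLift_mem_commutator hp (mem_ker_xiGamma.1 hs)))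

end GGamma

theorem statement_10_general (p q : ℕ) (hpo : Odd p) (hqo : Odd q)
    (V : Type) (R : Set (V × V))
    (hloop : ∀ v : V, (v, v) ∉ R)
    (N : Subgroup ↥(GGamma p q V R)) [N.Normal]
    (hNc : IsClosed (N : Set ↥(GGamma p q V R))) (hNprop : N ≠ ⊤) :
    (N ⊔ (xiGamma p q V R).ker).Normal ∧ N ⊔ (xiGamma p q V R).ker ≠ ⊤ := by
  refine ⟨Subgroup.sup_normal _ _, fun htop => hNprop ((Subgroup.eq_top_iff' N).2 fun g => ?_)⟩
  by_contra hg
  obtain ⟨FV, FR, hgM⟩ := GGamma.exists_notMem_sup_cylinderSubgroup hNc hg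
  set M := N ⊔ GGamma.cylinderSubgroup FV FR
  have hMS : M ⊔ (xiGamma p q V R).ker = ⊤ :=
    top_unique (htop ▸ sup_le_sup_right le_sup_left _)
  have hcomm : commutator _ ≤ M :=
    commutator_le_of_sup_eq_top hMS (GGamma.commutator_ker_xiGamma.trans_le bot_le)
  have hSM : (xiGamma p q V R).ker ≤ M :=
    (GGamma.ker_xiGamma_le_commutator_sup_cylinderSubgroup hpo hqo hloop FV FR).trans
      (sup_le hcomm le_sup_right)
  rw [sup_eq_left.2 hSM] at hMS
  exact hgM (hMS ▸ Subgroup.mem_top g)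

/-- Let `Γ = (V, R)` be a graph and let `S = ker ξ_Γ` be the product of
the `p`-Sylow and `q`-Sylow subgroups of `G_Γ`.  If `N` is a proper closed normal subgroup
of `G_Γ`, then `NS` (the join `N ⊔ S`) is also a proper normal subgroup of `G_Γ`. -/
theorem statement_10 (p q : ℕ) (hp : p.Prime) (hq : q.Prime) (hpo : Odd p) (hqo : Odd q)
    (hpq : p ≠ q) (V : Type) (R : Set (V × V))
    (hloop : ∀ v : V, (v, v) ∉ R) (hor : ∀ a b : V, (a, b) ∈ R → (b, a) ∉ R)
    (N : Subgroup ↥(GGamma p q V R)) [N.Normal]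
    (hNc : IsClosed (N : Set ↥(GGamma p q V R))) (hNprop : N ≠ ⊤) :
    (N ⊔ (xiGamma p q V R).ker).Normal ∧ N ⊔ (xiGamma p q V R).ker ≠ ⊤ :=
  statement_10_general p q hpo hqo V R hloop N hNc hNprop
end

section
/- Let Γ be a graph, I a set, and G̃ the universal Frattini cover of G_Γ × C_2^I. Let S_pq = S_p·S_q denote the product of the p-Sylow and q-Sylow subgroups of G̃ (both of which are closed and normal in G̃). Then for all closed normal subgroups M and N of G̃: S_pq·M ∩ S_pq·N = S_pq·(M ∩ N). More generally, this identity holds in any profinite group whose p-Sylow subgroup and q-Sylow subgroup are both closed and normal. -/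
open Function

open Function

noncomputable section

/-- The Frattini subgroup of a topological group: the intersection of all maximal open
subgroups. -/
def frattiniOpen (G : Type*) [Group G] [TopologicalSpace G] : Subgroup G :=
  ⨅ M ∈ {M : Subgroup G | IsOpen (M : Set G) ∧ IsCoatom M}, M

/-- A Frattini cover: a continuous epimorphism whose kernel is contained in the Frattini
subgroup of the source. -/
def IsFrattiniCover {H G : Type*} [Group H] [TopologicalSpace H] [Group G] [TopologicalSpace G]
    (φ : H →* G) : Prop :=
  Continuous φ ∧ Surjective φ ∧ φ.ker ≤ frattiniOpen H

/-- A universal Frattini cover: a Frattini cover through which every Frattini cover by a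
profinite group factors via a continuous epimorphism. -/
def IsUniversalFrattiniCover {tG G : Type*} [Group tG] [TopologicalSpace tG] [Group G]
    [TopologicalSpace G] (φt : tG →* G) : Prop :=
  IsFrattiniCover φt ∧
    ∀ (H : Type) [Group H] [TopologicalSpace H] [IsTopologicalGroup H] [CompactSpace H]
      [T2Space H] [TotallyDisconnectedSpace H] (β : H →* G), IsFrattiniCover β →
        ∃ γ : tG →* H, Continuous γ ∧ Surjective γ ∧ β.comp γ = φt

/-- A topological group is pro-`ℓ` if each of its continuous finite quotients is an
`ℓ`-group. -/
def IsProL (ℓ : ℕ) (H : Type*) [Group H] [TopologicalSpace H] : Prop :=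
  ∀ (Q : Type) [Group Q] [Finite Q] (φ : H →* Q),
    Surjective φ → IsOpen (φ.ker : Set H) → IsPGroup ℓ Q

end

/-!
Write `x ∈ S_pq M ∩ S_pq N` as `x = s m` with `s ∈ S_pq` and `m ∈ M ∩ S_pq N`. In a finite group
whose `p`- and `q`-Sylow subgroups are normal, `m` is the product of two of its powers `a c`,
where `a` has order `p^i q^j`, hence lies in `S_pq`, and `c` has order prime to `pq`. The image of
`c` in `G/N` lies in the `{p,q}`-group `S_pq N/N`, so `c ∈ M ∩ N`.

A profinite group is handled in its finite quotients `G/U`. There the images of `S_p`, `S_q` are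
again normal Sylow subgroups, because every `p`-element of `G/U` lifts, by compactness, to an
element all of whose finite images are `p`-elements, and such an element generates a closed pro-`p`
subgroup. A second compactness argument assembles the decompositions found in the quotients.
-/

open Subgroup

section GroupTheory

variable {G : Type*} [Group G]

theorem mem_of_pow_mem_of_coprime {K : Subgroup G} {a b : ℕ} (hab : a.Coprime b) {g : G}
    (ha : g ^ a ∈ K) (hb : g ^ b ∈ K) : g ∈ K := by
  have hbezout : g = (g ^ a) ^ Nat.gcdA a b * (g ^ b) ^ Nat.gcdB a b := by
    rw [← zpow_natCast, ← zpow_natCast, ← zpow_mul, ← zpow_mul, ← zpow_add, ← Nat.gcd_eq_gcd_ab,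
      hab.gcd_eq_one, Nat.cast_one, zpow_one]
  rw [hbezout]
  exact mul_mem (zpow_mem ha _) (zpow_mem hb _)

theorem exists_zpow_mul_zpow_eq_self_of_coprime {K : Subgroup G} {a b : ℕ} (hab : a.Coprime b)
    {g : G} (hg : g ^ (a * b) ∈ K) :
    ∃ u v : ℤ, (g ^ u) ^ a ∈ K ∧ (g ^ v) ^ b ∈ K ∧ g ^ u * g ^ v = g := by
  refine ⟨b * Nat.gcdB a b, a * Nat.gcdA a b, ?_, ?_, ?_⟩
  · have : (g ^ (b * Nat.gcdB a b)) ^ a = (g ^ (a * b)) ^ Nat.gcdB a b := by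
      simp only [← zpow_natCast, ← zpow_mul]; push_cast; ring_nf
    exact this ▸ zpow_mem hg _
  · have : (g ^ (a * Nat.gcdA a b)) ^ b = (g ^ (a * b)) ^ Nat.gcdA a b := by
      simp only [← zpow_natCast, ← zpow_mul]; push_cast; ring_nf
    exact this ▸ zpow_mem hg _
  · rw [← zpow_add, add_comm, ← Nat.gcd_eq_gcd_ab, hab.gcd_eq_one, Nat.cast_one, zpow_one]

/-- `x ^ u` is the `p`-part of `x` modulo `K`. -/
theorem exists_zpow_pow_prime_pow_mem {p : ℕ} (hp : p.Prime) {K L : Subgroup G} (hKL : K ≤ L)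
    {x : G} {n k : ℕ} (hn : n ≠ 0) (hxn : x ^ n ∈ K) (hxk : x ^ p ^ k ∈ L) :
    ∃ u : ℤ, (∃ i : ℕ, (x ^ u) ^ p ^ i ∈ K) ∧ (x ^ u)⁻¹ * x ∈ L := by
  obtain ⟨i, r, hpr, rfl⟩ := Nat.exists_eq_pow_mul_and_not_dvd hn p hp.ne_one
  have hcop : ∀ j, (p ^ j).Coprime r := fun j => ((hp.coprime_iff_not_dvd).2 hpr).pow_left j
  obtain ⟨u, v, hu, hv, huv⟩ := exists_zpow_mul_zpow_eq_self_of_coprime (hcop i) hxn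
  refine ⟨u, ⟨i, hu⟩, ?_⟩
  rw [← eq_inv_mul_of_mul_eq huv]
  refine mem_of_pow_mem_of_coprime (hcop k) ?_ (hKL hv)
  rw [← zpow_natCast, ← zpow_mul, mul_comm, zpow_mul, zpow_natCast]
  exact zpow_mem hxk v

variable {p q : ℕ} {P Q : Subgroup G}

theorem exists_pow_mul_pow_eq_one_of_mem_sup [Fact p.Prime] [Fact q.Prime] (hpq : p ≠ q)
    [P.Normal] [Q.Normal] (hP : IsPGroup p P) (hQ : IsPGroup q Q) {g : G} (hg : g ∈ P ⊔ Q) :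
    ∃ e f : ℕ, g ^ (p ^ e * q ^ f) = 1 := by
  obtain ⟨a, ha, b, hb, rfl⟩ := mem_sup_of_normal_left.mp hg
  obtain ⟨e, he⟩ := hP ⟨a, ha⟩
  obtain ⟨f, hf⟩ := hQ ⟨b, hb⟩
  simp only [Subtype.ext_iff, SubmonoidClass.mk_pow, OneMemClass.coe_one] at he hf
  have hab : Commute a b := commute_of_normal_of_disjoint P Q ‹_› ‹_›
    (IsPGroup.disjoint_of_ne p q hpq P Q hP hQ) a b ha hb
  refine ⟨e, f, ?_⟩
  rw [hab.mul_pow, pow_mul, he, mul_comm, pow_mul, hf, one_pow, one_pow, one_mul]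

theorem mem_sup_of_pow_mul_pow_eq_one (hpq : p.Coprime q)
    (hP : ∀ g : G, (∃ k, g ^ p ^ k = 1) → g ∈ P) (hQ : ∀ g : G, (∃ k, g ^ q ^ k = 1) → g ∈ Q)
    {g : G} {i j : ℕ} (hg : g ^ (p ^ i * q ^ j) = 1) : g ∈ P ⊔ Q := by
  obtain ⟨u, v, hu, hv, huv⟩ :=
    exists_zpow_mul_zpow_eq_self_of_coprime (K := ⊥) (hpq.pow i j) (mem_bot.mpr hg)
  rw [← huv]
  exact mul_mem_sup (hP _ ⟨i, mem_bot.mp hu⟩) (hQ _ ⟨j, mem_bot.mp hv⟩)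

theorem mem_of_mem_sup_of_pow_eq_one_of_coprime [Fact p.Prime] [Fact q.Prime] (hpq : p ≠ q)
    [P.Normal] [Q.Normal] (hP : IsPGroup p P) (hQ : IsPGroup q Q) {N : Subgroup G} [N.Normal]
    {c : G} (hc : c ∈ P ⊔ Q ⊔ N) {r : ℕ} (hcr : c ^ r = 1) (hpr : p.Coprime r)
    (hqr : q.Coprime r) : c ∈ N := by
  obtain ⟨s, hs, n, hn, rfl⟩ := mem_sup_of_normal_left.mp hc
  have hsN : QuotientGroup.mk' N (s * n) ∈
      P.map (QuotientGroup.mk' N) ⊔ Q.map (QuotientGroup.mk' N) := by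
    have hn1 : QuotientGroup.mk' N n = 1 := (QuotientGroup.eq_one_iff n).mpr hn
    rw [← Subgroup.map_sup, map_mul, hn1, mul_one]
    exact mem_map_of_mem _ hs
  obtain ⟨e, f, hef⟩ := exists_pow_mul_pow_eq_one_of_mem_sup hpq (hP.map _) (hQ.map _) hsN
  refine mem_of_pow_mem_of_coprime (Nat.Coprime.mul_left (hpr.pow_left e) (hqr.pow_left f)) ?_
    (hcr ▸ one_mem N)
  rwa [← map_pow, QuotientGroup.mk'_apply, QuotientGroup.eq_one_iff] at hef

theorem sup_sup_inf_sup_sup_le [Finite G] (hp : p.Prime) (hq : q.Prime) (hpq : p ≠ q)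
    [P.Normal] [Q.Normal] (hPp : IsPGroup p P) (hQq : IsPGroup q Q)
    (hP : ∀ g : G, (∃ k, g ^ p ^ k = 1) → g ∈ P) (hQ : ∀ g : G, (∃ k, g ^ q ^ k = 1) → g ∈ Q)
    (M N : Subgroup G) [N.Normal] :
    (P ⊔ Q ⊔ M) ⊓ (P ⊔ Q ⊔ N) ≤ P ⊔ Q ⊔ (M ⊓ N) := by
  have := Fact.mk hp
  have := Fact.mk hq
  intro x hx
  obtain ⟨hxM, hxN⟩ := mem_inf.mp hx
  obtain ⟨s, hs, m, hm, rfl⟩ := mem_sup_of_normal_left.mp hxM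
  have hmN : m ∈ P ⊔ Q ⊔ N := by simpa using mul_mem (inv_mem (mem_sup_left hs)) hxN
  obtain ⟨i, n, hpn, hn⟩ := Nat.exists_eq_pow_mul_and_not_dvd (orderOf_pos m).ne' p hp.ne_one
  obtain ⟨j, r, hqr, rfl⟩ :=
    Nat.exists_eq_pow_mul_and_not_dvd (right_ne_zero_of_mul (hn ▸ (orderOf_pos m).ne')) q hq.ne_one
  have hpr : p.Coprime r := (hp.coprime_iff_not_dvd).2 fun h => hpn (h.mul_left _)
  replace hqr : q.Coprime r := (hq.coprime_iff_not_dvd).2 hqr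
  obtain ⟨u, v, hu, hv, huv⟩ := exists_zpow_mul_zpow_eq_self_of_coprime (K := ⊥) (g := m)
    (Nat.Coprime.mul_left (hpr.pow_left i) (hqr.pow_left j))
    (by rw [mem_bot, mul_assoc, ← hn, pow_orderOf_eq_one])
  have hS : m ^ u ∈ P ⊔ Q :=
    mem_sup_of_pow_mul_pow_eq_one ((Nat.coprime_primes hp hq).2 hpq) hP hQ (mem_bot.mp hu)
  have hN : m ^ v ∈ N := by
    refine mem_of_mem_sup_of_pow_eq_one_of_coprime hpq hPp hQq ?_ (mem_bot.mp hv) hpr hqr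
    rw [← inv_mul_eq_of_eq_mul huv.symm]
    exact mul_mem (inv_mem (mem_sup_left hS)) hmN
  rw [← huv]
  exact mul_mem (mem_sup_left hs) (mul_mem (mem_sup_left hS) (mem_sup_right ⟨zpow_mem hm v, hN⟩))

end GroupTheory

section Profinite

open scoped Pointwise

variable {G : Type} [Group G] [TopologicalSpace G]

instance : Nonempty (OpenNormalSubgroup G) := ⟨{ toSubgroup := ⊤, isOpen' := isOpen_univ }⟩

theorem OpenNormalSubgroup.nonempty_iInter_of_monotone [CompactSpace G]
    {F : OpenNormalSubgroup G → Set G} (hmono : Monotone F) (hclosed : ∀ U, IsClosed (F U))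
    (hne : ∀ U, (F U).Nonempty) :
    (⋂ U, F U).Nonempty :=
  IsCompact.nonempty_iInter_of_directed_nonempty_isCompact_isClosed F
    (fun U V => ⟨U ⊓ V, hmono inf_le_left, hmono inf_le_right⟩) hne
    (fun U => (hclosed U).isCompact) hclosed

variable [IsTopologicalGroup G] [CompactSpace G]

theorem isClosed_sup_of_normal [T2Space G] {H K : Subgroup G} [K.Normal]
    (hH : IsClosed (H : Set G)) (hK : IsClosed (K : Set G)) :
    IsClosed ((H ⊔ K : Subgroup G) : Set G) := by
  rw [mul_normal]
  exact (hH.isCompact.mul hK.isCompact).isClosed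

theorem IsProL.isPGroup_map_mk {p : ℕ} {S : Subgroup G} (hS : IsProL p S)
    (U : OpenNormalSubgroup G) :
    IsPGroup p (S.map (QuotientGroup.mk' (U : Subgroup G))) := by
  set ψ := (QuotientGroup.mk' (U : Subgroup G)).comp S.subtype
  have hker : IsOpen (ψ.ker : Set S) := by
    have : (ψ.ker : Set S) = Subtype.val ⁻¹' (U : Set G) := by
      ext s
      exact QuotientGroup.eq_one_iff (s : G)
    exact this ▸ U.isOpen.preimage continuous_subtype_val
  have h := hS ψ.range ψ.rangeRestrict ψ.rangeRestrict_surjective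
    (by rwa [MonoidHom.ker_rangeRestrict])
  rwa [MonoidHom.range_comp, range_subtype] at h

variable [TotallyDisconnectedSpace G]

theorem mem_of_forall_mem_sup_openNormalSubgroup {M : Subgroup G} (hM : IsClosed (M : Set G))
    {c : G} (h : ∀ U : OpenNormalSubgroup G, c ∈ M ⊔ U) : c ∈ M := by
  change c ∈ (⟨M, hM⟩ : ClosedSubgroup G).toSubgroup
  rw [ProfiniteGrp.closedSubgroup_eq_sInf_open, mem_sInf]
  rintro K ⟨hK, hMK⟩
  obtain ⟨U, hU⟩ := ProfiniteGrp.exist_openNormalSubgroup_sub_open_nhds_of_one hK K.one_mem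
  exact sup_le hMK (fun _ hg => hU hg) (h U)

theorem isProL_topologicalClosure_zpowers {p : ℕ} {y : G}
    (hy : ∀ W : OpenNormalSubgroup G, ∃ j, y ^ p ^ j ∈ W) :
    IsProL p (zpowers y).topologicalClosure := by
  intro Q _ _ φ hφ hker z
  obtain ⟨c, rfl⟩ := hφ z
  obtain ⟨O, hO, hOker⟩ := isOpen_induced_iff.mp hker
  obtain ⟨W, hW⟩ := ProfiniteGrp.exist_openNormalSubgroup_sub_open_nhds_of_one hO
    (hOker ▸ SetLike.mem_coe.2 φ.ker.one_mem :
      (1 : (zpowers y).topologicalClosure) ∈ Subtype.val ⁻¹' O)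
  obtain ⟨j, hj⟩ := hy W
  have hcW : (c : G) ^ p ^ j ∈ W := by
    refine closure_minimal (s := zpowers y) ?_ ((W.isClosed).preimage (continuous_pow (p ^ j)))
      (show (c : G) ∈ _root_.closure (zpowers y : Set G) from c.2)
    rintro _ ⟨k, rfl⟩
    have hcomm : (y ^ k) ^ p ^ j = (y ^ p ^ j) ^ k := by
      rw [← zpow_natCast, ← zpow_mul, mul_comm, zpow_mul, zpow_natCast]
    exact Set.mem_preimage.2 (hcomm ▸ zpow_mem hj k)
  refine ⟨j, ?_⟩
  rw [← map_pow, ← MonoidHom.mem_ker, ← SetLike.mem_coe, ← hOker]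
  simpa using hW hcW

theorem exists_mem_inv_mul_mem_of_pow_mem {p : ℕ} (hp : p.Prime) {S : Subgroup G}
    (hSmax : ∀ K : Subgroup G, IsClosed (K : Set G) → IsProL p K → K ≤ S)
    (U : OpenNormalSubgroup G) {x : G} {k : ℕ} (hx : x ^ p ^ k ∈ U) :
    ∃ y ∈ S, y⁻¹ * x ∈ U := by
  let F : OpenNormalSubgroup G → Set G := fun W =>
    {a | a⁻¹ * x ∈ U} ∩ {a | ∃ j, a ^ p ^ j ∈ W}
  have hmono : Monotone F := fun W W' h a ⟨ha, j, hj⟩ => ⟨ha, j, h hj⟩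
  have hclosed : ∀ W, IsClosed (F W) := by
    intro W
    have hpow : {a : G | ∃ j, a ^ p ^ j ∈ W} =
        QuotientGroup.mk' (W : Subgroup G) ⁻¹' {g | ∃ j, g ^ p ^ j = 1} := by
      ext a
      simp only [Set.mem_ofPred_eq, Set.mem_preimage, QuotientGroup.mk'_apply,
        ← QuotientGroup.mk_pow, QuotientGroup.eq_one_iff]
      rfl
    exact (U.isClosed.preimage (continuous_inv.mul continuous_const)).inter
      (hpow ▸ (isClosed_discrete (α := G ⧸ (W : Subgroup G)) _).preimage continuous_quotient_mk')
  have hne : ∀ W, (F W).Nonempty := by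
    intro W
    have : ((U ⊓ W : OpenNormalSubgroup G) : Subgroup G).FiniteIndex :=
      Subgroup.finiteIndex_of_finite_quotient
    obtain ⟨u, ⟨i, hi⟩, hu⟩ := exists_zpow_pow_prime_pow_mem hp (inf_le_left : U ⊓ W ≤ U)
      Subgroup.FiniteIndex.index_ne_zero (pow_index_mem _ x) hx
    exact ⟨x ^ u, hu, i, inf_le_right (a := U) hi⟩
  obtain ⟨y, hy⟩ := OpenNormalSubgroup.nonempty_iInter_of_monotone hmono hclosed hne
  rw [Set.mem_iInter] at hy
  exact ⟨y, hSmax _ (isClosed_topologicalClosure _)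
    (isProL_topologicalClosure_zpowers fun W => (hy W).2)
    (le_topologicalClosure _ (mem_zpowers y)), (hy U).1⟩

theorem mem_map_mk_of_pow_eq_one {p : ℕ} (hp : p.Prime) {S : Subgroup G}
    (hSmax : ∀ K : Subgroup G, IsClosed (K : Set G) → IsProL p K → K ≤ S)
    (U : OpenNormalSubgroup G) (g : G ⧸ (U : Subgroup G)) (hg : ∃ k, g ^ p ^ k = 1) :
    g ∈ S.map (QuotientGroup.mk' (U : Subgroup G)) := by
  obtain ⟨k, hk⟩ := hg
  obtain ⟨x, rfl⟩ := QuotientGroup.mk'_surjective _ g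
  rw [← map_pow, QuotientGroup.mk'_apply, QuotientGroup.eq_one_iff] at hk
  obtain ⟨y, hyS, hyx⟩ := exists_mem_inv_mul_mem_of_pow_mem hp hSmax U hk
  exact ⟨y, hyS, QuotientGroup.eq.mpr hyx⟩

theorem mem_sup_inf_of_forall_mk_mem {S M N : Subgroup G} [S.Normal] (hS : IsClosed (S : Set G))
    (hM : IsClosed (M : Set G)) (hN : IsClosed (N : Set G)) {x : G}
    (hx : ∀ U : OpenNormalSubgroup G, QuotientGroup.mk' (U : Subgroup G) x ∈
      S.map (QuotientGroup.mk' (U : Subgroup G)) ⊔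
        (M.map (QuotientGroup.mk' (U : Subgroup G)) ⊓ N.map (QuotientGroup.mk' (U : Subgroup G)))) :
    x ∈ S ⊔ (M ⊓ N) := by
  let F : OpenNormalSubgroup G → Set G := fun U =>
    ((M ⊔ U : Subgroup G) : Set G) ∩ ((N ⊔ U : Subgroup G) : Set G) ∩ {c | x * c⁻¹ ∈ S}
  have hmono : Monotone F := fun U V (hUV : (U : Subgroup G) ≤ V) c ⟨⟨hcM, hcN⟩, hc⟩ =>
    ⟨⟨sup_le_sup_left hUV M hcM, sup_le_sup_left hUV N hcN⟩, hc⟩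
  have hclosed : ∀ U, IsClosed (F U) := fun U =>
    ((isClosed_of_isOpen _ (isOpen_mono le_sup_right U.isOpen)).inter
      (isClosed_of_isOpen _ (isOpen_mono le_sup_right U.isOpen))).inter
      (hS.preimage (continuous_const.mul continuous_inv))
  have hne : ∀ U, (F U).Nonempty := by
    intro U
    have : (S.map (QuotientGroup.mk' (U : Subgroup G))).Normal :=
      ‹S.Normal›.map _ (QuotientGroup.mk'_surjective _)
    obtain ⟨_, ⟨s, hs, rfl⟩, d, hd, hsd⟩ := mem_sup_of_normal_left.mp (hx U)
    have hmk : QuotientGroup.mk' (U : Subgroup G) (s⁻¹ * x) = d := by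
      rw [map_mul, map_inv, ← hsd, inv_mul_cancel_left]
    have hmem : ∀ K : Subgroup G, d ∈ K.map (QuotientGroup.mk' (U : Subgroup G)) →
        s⁻¹ * x ∈ K ⊔ U := by
      intro K hK
      rw [← QuotientGroup.ker_mk' (U : Subgroup G), ← comap_map_eq]
      exact mem_comap.mpr (hmk ▸ hK)
    exact ⟨s⁻¹ * x, ⟨hmem M (mem_inf.mp hd).1, hmem N (mem_inf.mp hd).2⟩, by simpa using hs⟩
  obtain ⟨c, hc⟩ := OpenNormalSubgroup.nonempty_iInter_of_monotone hmono hclosed hne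
  rw [Set.mem_iInter] at hc
  have hcM : c ∈ M := mem_of_forall_mem_sup_openNormalSubgroup hM fun U => (hc U).1.1
  have hcN : c ∈ N := mem_of_forall_mem_sup_openNormalSubgroup hN fun U => (hc U).1.2
  simpa using mul_mem_sup (hc (Classical.arbitrary _)).2 (mem_inf.mpr ⟨hcM, hcN⟩)

end Profinite

theorem statement_17_general (p q : ℕ) (hp : p.Prime) (hq : q.Prime)
    (hpq : p ≠ q)
    (tG : Type) [Group tG] [TopologicalSpace tG] [IsTopologicalGroup tG] [CompactSpace tG]
    [TotallyDisconnectedSpace tG]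
    (Sp Sq : Subgroup tG) [Sp.Normal] [Sq.Normal]
    (hSpc : IsClosed (Sp : Set tG)) (hSqc : IsClosed (Sq : Set tG))
    (hSppro : IsProL p ↥Sp) (hSqpro : IsProL q ↥Sq)
    (hSpmax : ∀ K : Subgroup tG, IsClosed (K : Set tG) → IsProL p ↥K → K ≤ Sp)
    (hSqmax : ∀ K : Subgroup tG, IsClosed (K : Set tG) → IsProL q ↥K → K ≤ Sq)
    (M N : Subgroup tG) [N.Normal]
    (hMc : IsClosed (M : Set tG)) (hNc : IsClosed (N : Set tG)) :
    ((Sp ⊔ Sq) ⊔ M) ⊓ ((Sp ⊔ Sq) ⊔ N) = (Sp ⊔ Sq) ⊔ (M ⊓ N) := by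
  refine le_antisymm (fun x hx => ?_)
    (le_inf (sup_le_sup_left inf_le_left _) (sup_le_sup_left inf_le_right _))
  refine mem_sup_inf_of_forall_mk_mem (isClosed_sup_of_normal hSpc hSqc) hMc hNc fun U => ?_
  set π := QuotientGroup.mk' (U : Subgroup tG)
  have hsurj : Function.Surjective π := QuotientGroup.mk'_surjective _
  have : (Sp.map π).Normal := ‹Sp.Normal›.map π hsurj
  have : (Sq.map π).Normal := ‹Sq.Normal›.map π hsurj
  have : (N.map π).Normal := ‹N.Normal›.map π hsurj
  have hxU : π x ∈ (Sp.map π ⊔ Sq.map π ⊔ M.map π) ⊓ (Sp.map π ⊔ Sq.map π ⊔ N.map π) := by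
    simpa only [Subgroup.map_sup] using map_inf_le _ _ π (mem_map_of_mem π hx)
  rw [Subgroup.map_sup]
  exact sup_sup_inf_sup_sup_le hp hq hpq (hSppro.isPGroup_map_mk U) (hSqpro.isPGroup_map_mk U)
    (mem_map_mk_of_pow_eq_one hp hSpmax U) (mem_map_mk_of_pow_eq_one hq hSqmax U) _ _ hxU

/-- Let `Γ` be a graph, `I` a set, and `G̃` the universal Frattini cover
of `G_Γ × C_2^I`.  Let `S_pq = S_p·S_q` (the join) of the `p`-Sylow and `q`-Sylow subgroups
of `G̃`, both closed and normal.  Then for all closed normal subgroups `M`, `N` of `G̃`: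
`S_pq·M ∩ S_pq·N = S_pq·(M ∩ N)`. -/
theorem statement_17 (p q : ℕ) (hp : p.Prime) (hq : q.Prime) (hpo : Odd p) (hqo : Odd q)
    (hpq : p ≠ q) (V I : Type) (R : Set (V × V))
    (hloop : ∀ v : V, (v, v) ∉ R) (hor : ∀ a b : V, (a, b) ∈ R → (b, a) ∉ R)
    (tG : Type) [Group tG] [TopologicalSpace tG] [IsTopologicalGroup tG] [CompactSpace tG]
    [T2Space tG] [TotallyDisconnectedSpace tG]
    (φt : tG →* (↥(GGamma p q V R) × (I → ℤˣ))) (huniv : IsUniversalFrattiniCover φt)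
    (Sp Sq : Subgroup tG) [Sp.Normal] [Sq.Normal]
    (hSpc : IsClosed (Sp : Set tG)) (hSqc : IsClosed (Sq : Set tG))
    (hSppro : IsProL p ↥Sp) (hSqpro : IsProL q ↥Sq)
    (hSpmax : ∀ K : Subgroup tG, IsClosed (K : Set tG) → IsProL p ↥K → K ≤ Sp)
    (hSqmax : ∀ K : Subgroup tG, IsClosed (K : Set tG) → IsProL q ↥K → K ≤ Sq)
    (M N : Subgroup tG) [M.Normal] [N.Normal]
    (hMc : IsClosed (M : Set tG)) (hNc : IsClosed (N : Set tG)) :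
    ((Sp ⊔ Sq) ⊔ M) ⊓ ((Sp ⊔ Sq) ⊔ N) = (Sp ⊔ Sq) ⊔ (M ⊓ N) :=
  statement_17_general p q hp hq hpq tG Sp Sq hSpc hSqc hSppro hSqpro hSpmax hSqmax M N hMc hNc
end

section
/- Let Γ = (V,R) be a graph. (i) For all finite subsets U, U' ⊆ V, the following product identity holds in G_Γ: (⋂_{v∈U} ker(π_v))·(⋂_{v∈U'} ker(π_v)) = ⋂_{v∈U∩U'} ker(π_v). (ii) Consequently, if N is an open normal subgroup of G_Γ with G_Γ/N ≅ C_2 and n is minimal such that ⋂_{v∈U} ker(π_v) ⊆ N for some n-element subset U ⊆ V, then this n-element set U is unique: if U and U' are two n-element subsets of V with ⋂_{v∈U} ker(π_v) ⊆ N and ⋂_{v∈U'} ker(π_v) ⊆ N, then U = U'. -/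
open Function

/-!
Choosing the coordinates of `a ∈ G_Γ` to be `1` on `U` and those of `g` off `U` splits any `g`
vanishing on `U ∩ U'` as `a · (a⁻¹ g)` with the factors vanishing on `U` and on `U'`; such an `a`
exists because `G_Γ → D_p^V` is onto. Then `⋂_{U ∩ U'} ker π_v` lies in `N` whenever both
`⋂_U ker π_v` and `⋂_{U'} ker π_v` do, so minimality of `n` forces `U = U' = U ∩ U'`.
-/

open Pointwise in
theorem Subgroup.coe_iInf_ker_mul_coe_iInf_ker {G ι : Type*} {H : ι → Type*} [Group G]
    [∀ i, Group (H i)] (f : ∀ i, G →* H i) (hf : Surjective (MonoidHom.pi f)) (U U' : Set ι) :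
    ((↑(⨅ i ∈ U, (f i).ker) : Set G) * ↑(⨅ i ∈ U', (f i).ker)) = ↑(⨅ i ∈ U ∩ U', (f i).ker) := by
  classical
  ext g
  simp only [Set.mem_mul, SetLike.mem_coe, Subgroup.mem_iInf, MonoidHom.mem_ker]
  constructor
  · rintro ⟨a, ha, b, hb, rfl⟩ i ⟨hiU, hiU'⟩
    rw [map_mul, ha i hiU, hb i hiU', one_mul]
  · intro hg
    obtain ⟨a, ha⟩ := hf fun i => if i ∈ U then 1 else f i g
    have ha_apply (i : ι) : f i a = if i ∈ U then 1 else f i g := congr_fun ha i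
    refine ⟨a, fun i hi => by simp [ha_apply, hi], a⁻¹ * g, fun i hi => ?_, mul_inv_cancel_left a g⟩
    by_cases hiU : i ∈ U
    · simp [ha_apply, hiU, hg i ⟨hiU, hi⟩]
    · simp [ha_apply, hiU]

def GGamma.ofVertices {p q : ℕ} {V : Type*} {R : Set (V × V)} (a : V → DihedralGroup p) :
    GGamma p q V R :=
  ⟨(a, fun r => SemidirectProduct.inr (a r.1.1, a r.1.2)),
    fun _ => SemidirectProduct.rightHom_inr _⟩

theorem GGamma.vProj_surjective (p q : ℕ) (V : Type*) (R : Set (V × V)) :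
    Surjective (MonoidHom.pi (vProj p q V R)) :=
  fun a => ⟨GGamma.ofVertices a, rfl⟩

open Pointwise in
theorem statement_19_general (p q : ℕ) (V : Type) [DecidableEq V] (R : Set (V × V)) :
    (∀ U U' : Finset V,
      ((↑(⨅ v ∈ U, (vProj p q V R v).ker) : Set ↥(GGamma p q V R)) *
          (↑(⨅ v ∈ U', (vProj p q V R v).ker) : Set ↥(GGamma p q V R))) =
        (↑(⨅ v ∈ U ∩ U', (vProj p q V R v).ker) : Set ↥(GGamma p q V R))) ∧
    ∀ (N : Subgroup ↥(GGamma p q V R)), N.Normal →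
      IsOpen (N : Set ↥(GGamma p q V R)) →
      (∃ ψ : ↥(GGamma p q V R) →* ℤˣ, Function.Surjective ψ ∧ ψ.ker = N) →
      ∀ (n : ℕ) (U U' : Finset V), U.card = n → U'.card = n →
        (⨅ v ∈ U, (vProj p q V R v).ker) ≤ N →
        (⨅ v ∈ U', (vProj p q V R v).ker) ≤ N →
        (∀ (m : ℕ) (U'' : Finset V), U''.card = m →
          (⨅ v ∈ U'', (vProj p q V R v).ker) ≤ N → n ≤ m) →
        U = U' := by
  have product (U U' : Finset V) :
      ((↑(⨅ v ∈ U, (vProj p q V R v).ker) : Set ↥(GGamma p q V R)) *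
          ↑(⨅ v ∈ U', (vProj p q V R v).ker)) = ↑(⨅ v ∈ U ∩ U', (vProj p q V R v).ker) := by
    simpa only [← Finset.coe_inter, Finset.mem_coe] using
      Subgroup.coe_iInf_ker_mul_coe_iInf_ker _ (GGamma.vProj_surjective p q V R) U U'
  refine ⟨product, fun N _ _ _ n U U' hU hU' hUN hU'N hmin => ?_⟩
  have hinter : (⨅ v ∈ U ∩ U', (vProj p q V R v).ker) ≤ N := by
    rw [← SetLike.coe_subset_coe, ← product]
    exact Subgroup.mul_subset hUN hU'N
  have hcard : n ≤ (U ∩ U').card := hmin _ _ rfl hinter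
  have hU_eq : U ∩ U' = U :=
    Finset.eq_of_subset_of_card_le Finset.inter_subset_left (by omega)
  have hU'_eq : U ∩ U' = U' :=
    Finset.eq_of_subset_of_card_le Finset.inter_subset_right (by omega)
  rw [← hU_eq, hU'_eq]

open Pointwise in
/-- Let `Γ = (V, R)` be a graph.
(i) For all finite `U, U' ⊆ V`, in `G_Γ` one has the product identity
`(⋂_{v∈U} ker π_v)·(⋂_{v∈U'} ker π_v) = ⋂_{v∈U∩U'} ker π_v`.
(ii) Consequently, if `N` is open normal with `G_Γ/N ≅ C_2` and `n` is minimal such that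
`⋂_{v∈U} ker π_v ⊆ N` for some `n`-element `U ⊆ V`, then the `n`-element set `U` is
unique. -/
theorem statement_19 (p q : ℕ) (hp : p.Prime) (hq : q.Prime) (hpo : Odd p) (hqo : Odd q)
    (hpq : p ≠ q) (V : Type) [DecidableEq V] (R : Set (V × V))
    (hloop : ∀ v : V, (v, v) ∉ R) (hor : ∀ a b : V, (a, b) ∈ R → (b, a) ∉ R) :
    (∀ U U' : Finset V,
      ((↑(⨅ v ∈ U, (vProj p q V R v).ker) : Set ↥(GGamma p q V R)) *
          (↑(⨅ v ∈ U', (vProj p q V R v).ker) : Set ↥(GGamma p q V R))) =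
        (↑(⨅ v ∈ U ∩ U', (vProj p q V R v).ker) : Set ↥(GGamma p q V R))) ∧
    ∀ (N : Subgroup ↥(GGamma p q V R)), N.Normal →
      IsOpen (N : Set ↥(GGamma p q V R)) →
      (∃ ψ : ↥(GGamma p q V R) →* ℤˣ, Function.Surjective ψ ∧ ψ.ker = N) →
      ∀ (n : ℕ) (U U' : Finset V), U.card = n → U'.card = n →
        (⨅ v ∈ U, (vProj p q V R v).ker) ≤ N →
        (⨅ v ∈ U', (vProj p q V R v).ker) ≤ N →
        (∀ (m : ℕ) (U'' : Finset V), U''.card = m →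
          (⨅ v ∈ U'', (vProj p q V R v).ker) ≤ N → n ≤ m) →
        U = U' :=
  statement_19_general p q V R
end
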